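/- arXiv:0804.2679 — 4 statements merged into one kernel-verified Lean document; each statement's English description precedes it below -/
import Mathlib

section
/- Let γ be a smooth map from ℝ³ to the positive-definite symmetric 3×3 real matrices with ∂^β(γ_{μν}(x) − δ_{μν}) = o(|x|^{−1/2−|β|}) for every multi-index β, and let f : ℝ³ → ℝ be smooth with f ≥ 0 and ∂^β f(x) = o(|x|^{−3−|β|}) for every multi-index β. Assume in addition that γ and f are axially symmetric, i.e. for every rotation R of ℝ³ fixing the x³-axis one has γ(Rx) = R γ(x) Rᵀ and f(Rx) = f(x) for all x. Then the unique smooth solution α of (det γ)^{−1/2} ∂_μ( (det γ)^{1/2} (γ^{−1})^{μν} ∂_ν α ) = f α with α(x) → 1 as |x| → ∞ is itself axially symmetric: α(Rx) = α(x) for every such rotation R and every x ∈ ℝ³. -/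
open Real Filter Asymptotics

noncomputable section

/-- Partial derivative of a scalar function on ℝ³ in the μ-th coordinate direction. -/
def pd3 (μ : Fin 3) (g : EuclideanSpace ℝ (Fin 3) → ℝ) (x : EuclideanSpace ℝ (Fin 3)) : ℝ :=
  fderiv ℝ g x (EuclideanSpace.single μ 1)

/-- The Laplace–Beltrami operator of the metric γ, in the global coordinates of ℝ³ :
`Δ_γ α = (det γ)^{-1/2} ∂_μ ( (det γ)^{1/2} (γ⁻¹)^{μν} ∂_ν α )`. -/
def laplaceBeltrami (γ : EuclideanSpace ℝ (Fin 3) → Matrix (Fin 3) (Fin 3) ℝ)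
    (α : EuclideanSpace ℝ (Fin 3) → ℝ) (x : EuclideanSpace ℝ (Fin 3)) : ℝ :=
  (Real.sqrt (γ x).det)⁻¹ *
    ∑ μ, pd3 μ (fun y => Real.sqrt (γ y).det * ∑ ν, (γ y)⁻¹ μ ν * pd3 ν α y) x

/-- The matrix of the rotation of ℝ³ by angle φ about the x³-axis. -/
def rotZ (φ : ℝ) : Matrix (Fin 3) (Fin 3) ℝ :=
  !![Real.cos φ, -Real.sin φ, 0; Real.sin φ, Real.cos φ, 0; 0, 0, 1]

/-- The action of the rotation about the x³-axis on points of ℝ³. -/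
def rotZPt (φ : ℝ) (x : EuclideanSpace ℝ (Fin 3)) : EuclideanSpace ℝ (Fin 3) :=
  WithLp.toLp 2 (fun μ => ∑ ν, rotZ φ μ ν * x ν)

section AUX
open Matrix
abbrev E3 := EuclideanSpace ℝ (Fin 3)




lemma contDiff_pd3 {g : E3 → ℝ} (hg : ContDiff ℝ (⊤ : ℕ∞) g) (ν : Fin 3) :
    ContDiff ℝ (⊤ : ℕ∞) (pd3 ν g) :=
  (hg.fderiv_right (by simp)).clm_apply contDiff_const

lemma diffAt_pd3 {g : E3 → ℝ} (hg : ContDiff ℝ (⊤ : ℕ∞) g) (ν : Fin 3) (x : E3) :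
    DifferentiableAt ℝ (pd3 ν g) x :=
  ((contDiff_pd3 hg ν).differentiable (by simp)).differentiableAt

lemma pd3_add {F G : E3 → ℝ} {x : E3} (hF : DifferentiableAt ℝ F x)
    (hG : DifferentiableAt ℝ G x) (μ : Fin 3) :
    pd3 μ (fun y => F y + G y) x = pd3 μ F x + pd3 μ G x := by
  unfold pd3
  rw [fderiv_fun_add hF hG]; rfl

lemma pd3_const_mul {F : E3 → ℝ} {x : E3} (hF : DifferentiableAt ℝ F x) (c : ℝ) (μ : Fin 3) :
    pd3 μ (fun y => c * F y) x = c * pd3 μ F x := by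
  unfold pd3
  rw [fderiv_const_mul hF]; rfl

lemma pd3_mul {F G : E3 → ℝ} {x : E3} (hF : DifferentiableAt ℝ F x)
    (hG : DifferentiableAt ℝ G x) (μ : Fin 3) :
    pd3 μ (fun y => F y * G y) x = pd3 μ F x * G x + F x * pd3 μ G x := by
  unfold pd3
  rw [fderiv_fun_mul hF hG]; simp [ContinuousLinearMap.add_apply]; ring

lemma pd3_sum {ι : Type*} (s : Finset ι) {F : ι → E3 → ℝ} {x : E3}
    (hF : ∀ i ∈ s, DifferentiableAt ℝ (F i) x) (μ : Fin 3) :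
    pd3 μ (fun y => ∑ i ∈ s, F i y) x = ∑ i ∈ s, pd3 μ (F i) x := by
  unfold pd3
  rw [fderiv_fun_sum hF]; simp

lemma euclid_decomp (w : E3) : w = ∑ ρ, w ρ • EuclideanSpace.single ρ (1:ℝ) := by
  ext μ
  rw [WithLp.ofLp_sum, Finset.sum_apply]
  simp [EuclideanSpace.single_apply, PiLp.smul_apply, smul_eq_mul]

lemma clm_apply_eq_sum (L : E3 →L[ℝ] ℝ) (w : E3) :
    L w = ∑ ρ, w ρ * L (EuclideanSpace.single ρ (1:ℝ)) := by
  conv_lhs => rw [euclid_decomp w]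
  rw [map_sum]
  simp [smul_eq_mul]

lemma fderiv_apply_eq_sum_pd3 {g : E3 → ℝ} (x : E3) (w : E3) :
    fderiv ℝ g x w = ∑ ρ, w ρ * pd3 ρ g x :=
  clm_apply_eq_sum _ w







lemma rotZ_transpose (φ : ℝ) :
    (rotZ φ)ᵀ = !![Real.cos φ, Real.sin φ, 0; -Real.sin φ, Real.cos φ, 0; 0, 0, 1] := by
  ext i j
  fin_cases i <;> fin_cases j <;> simp [rotZ, Matrix.transpose_apply]

lemma rotZ_mul_transpose (φ : ℝ) : rotZ φ * (rotZ φ)ᵀ = 1 := by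
  rw [rotZ_transpose]
  ext i j
  fin_cases i <;> fin_cases j <;>
    simp [rotZ, Matrix.mul_apply, Fin.sum_univ_three, Matrix.one_apply] <;>
    nlinarith [Real.sin_sq_add_cos_sq φ]

lemma transpose_mul_rotZ (φ : ℝ) : (rotZ φ)ᵀ * rotZ φ = 1 := by
  rw [rotZ_transpose]
  ext i j
  fin_cases i <;> fin_cases j <;>
    simp [rotZ, Matrix.mul_apply, Fin.sum_univ_three, Matrix.one_apply] <;>
    nlinarith [Real.sin_sq_add_cos_sq φ]

lemma det_rotZ (φ : ℝ) : (rotZ φ).det = 1 := by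
  simp [rotZ, Matrix.det_fin_three]
  nlinarith [Real.sin_sq_add_cos_sq φ]

lemma rotZ_inv (φ : ℝ) : (rotZ φ)⁻¹ = (rotZ φ)ᵀ :=
  Matrix.inv_eq_right_inv (rotZ_mul_transpose φ)

lemma rotZ_transpose_inv (φ : ℝ) : ((rotZ φ)ᵀ)⁻¹ = rotZ φ :=
  Matrix.inv_eq_right_inv (transpose_mul_rotZ φ)

/-- `rotZPt φ` as a continuous linear map. -/
def rotCLM (φ : ℝ) : E3 →L[ℝ] E3 :=
  LinearMap.toContinuousLinearMap
    { toFun := rotZPt φ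
      map_add' := by
        intro x y
        ext μ
        simp [rotZPt, mul_add, Finset.sum_add_distrib]
      map_smul' := by
        intro c x
        ext μ
        simp [rotZPt, Finset.mul_sum, smul_eq_mul]
        exact Finset.sum_congr rfl fun ν _ => by ring }

@[simp] lemma rotCLM_apply (φ : ℝ) (x : E3) : rotCLM φ x = rotZPt φ x := rfl

lemma rotCLM_single (φ : ℝ) (μ : Fin 3) :
    rotCLM φ (EuclideanSpace.single μ 1) = (WithLp.toLp 2 (fun ρ => rotZ φ ρ μ) : E3) := by
  ext ρ
  show ∑ ν, rotZ φ ρ ν * (EuclideanSpace.single μ (1:ℝ)) ν = rotZ φ ρ μ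
  simp [EuclideanSpace.single_apply]

lemma rotZPt_left_inv (φ : ℝ) (x : E3) : rotZPt (-φ) (rotZPt φ x) = x := by
  have h : rotZ (-φ) = (rotZ φ)ᵀ := by
    ext i j; fin_cases i <;> fin_cases j <;> simp [rotZ, Matrix.transpose_apply]
  ext μ
  show ∑ ν, rotZ (-φ) μ ν * (∑ σ, rotZ φ ν σ * x σ) = x μ
  rw [h]
  have := congrArg (fun M => ∑ σ, M μ σ * x σ) (transpose_mul_rotZ φ)
  simp only [Matrix.mul_apply] at this
  calc ∑ ν, (rotZ φ)ᵀ μ ν * ∑ σ, rotZ φ ν σ * x σ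
      = ∑ ν, ∑ σ, (rotZ φ)ᵀ μ ν * (rotZ φ ν σ * x σ) := by
        exact Finset.sum_congr rfl fun ν _ => Finset.mul_sum _ _ _
    _ = ∑ σ, ∑ ν, (rotZ φ)ᵀ μ ν * (rotZ φ ν σ * x σ) := Finset.sum_comm
    _ = ∑ σ, (∑ ν, (rotZ φ)ᵀ μ ν * rotZ φ ν σ) * x σ := by
        refine Finset.sum_congr rfl fun σ _ => ?_
        rw [Finset.sum_mul]
        exact Finset.sum_congr rfl fun ν _ => by ring
    _ = x μ := by
        rw [this]
        simp [Matrix.one_apply]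

lemma rotZPt_right_inv (φ : ℝ) (x : E3) : rotZPt φ (rotZPt (-φ) x) = x := by
  have := rotZPt_left_inv (-φ) x
  simpa using this

/-- `rotZPt φ` as a homeomorphism. -/
def rotHomeo (φ : ℝ) : E3 ≃ₜ E3 :=
  { toFun := rotZPt φ
    invFun := rotZPt (-φ)
    left_inv := rotZPt_left_inv φ
    right_inv := rotZPt_right_inv φ
    continuous_toFun := (rotCLM φ).continuous
    continuous_invFun := (rotCLM (-φ)).continuous }

lemma tendsto_rotZPt_cocompact (φ : ℝ) :
    Tendsto (rotZPt φ) (cocompact E3) (cocompact E3) := by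
  rw [hasBasis_cocompact.tendsto_iff hasBasis_cocompact]
  intro K hK
  refine ⟨rotZPt (-φ) '' K, hK.image (rotCLM (-φ)).continuous, fun x hx hmem => hx ?_⟩
  exact ⟨rotZPt φ x, hmem, rotZPt_left_inv φ x⟩




section gamma
variable (γ : E3 → Matrix (Fin 3) (Fin 3) ℝ)

lemma det_pos' (hγpos : ∀ x, (γ x).PosDef) (x : E3) : 0 < (γ x).det := (hγpos x).det_pos

lemma contDiff_det (hγsmooth : ∀ μ ν, ContDiff ℝ (⊤ : ℕ∞) fun x => γ x μ ν) : ContDiff ℝ (⊤ : ℕ∞) fun y => (γ y).det := by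
  have : (fun y => (γ y).det) = fun y =>
      γ y 0 0 * γ y 1 1 * γ y 2 2 - γ y 0 0 * γ y 1 2 * γ y 2 1
      - γ y 0 1 * γ y 1 0 * γ y 2 2 + γ y 0 1 * γ y 1 2 * γ y 2 0
      + (γ y 0 2 * γ y 1 0 * γ y 2 1 - γ y 0 2 * γ y 1 1 * γ y 2 0) := by
    funext y; rw [Matrix.det_fin_three]; try ring
  rw [this]
  have h := hγsmooth
  exact ((((((h 0 0).mul (h 1 1)).mul (h 2 2)).sub (((h 0 0).mul (h 1 2)).mul (h 2 1))).sub
    (((h 0 1).mul (h 1 0)).mul (h 2 2))).add (((h 0 1).mul (h 1 2)).mul (h 2 0))).add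
    ((((h 0 2).mul (h 1 0)).mul (h 2 1)).sub (((h 0 2).mul (h 1 1)).mul (h 2 0)))

lemma contDiff_sqrtDet (hγsmooth : ∀ μ ν, ContDiff ℝ (⊤ : ℕ∞) fun x => γ x μ ν) (hγpos : ∀ x, (γ x).PosDef) : ContDiff ℝ (⊤ : ℕ∞) fun y => Real.sqrt (γ y).det := by
  rw [contDiff_iff_contDiffAt]
  intro x
  exact (Real.contDiffAt_sqrt (det_pos' γ hγpos x).ne').comp x
    (contDiff_det γ hγsmooth).contDiffAt

lemma sqrtDet_pos (hγpos : ∀ x, (γ x).PosDef) (x : E3) : 0 < Real.sqrt (γ x).det :=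
  Real.sqrt_pos.mpr (det_pos' γ hγpos x)

lemma contDiff_inv_entry (hγsmooth : ∀ μ ν, ContDiff ℝ (⊤ : ℕ∞) fun x => γ x μ ν) (hγpos : ∀ x, (γ x).PosDef) (μ ν : Fin 3) : ContDiff ℝ (⊤ : ℕ∞) fun y => (γ y)⁻¹ μ ν := by
  have hadj : ContDiff ℝ (⊤ : ℕ∞) fun y => (γ y).adjugate μ ν := by
    have : (fun y => (γ y).adjugate μ ν) = fun y =>
        !![γ y 1 1 * γ y 2 2 - γ y 1 2 * γ y 2 1,
           -(γ y 0 1 * γ y 2 2) + γ y 0 2 * γ y 2 1,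
           γ y 0 1 * γ y 1 2 - γ y 0 2 * γ y 1 1;
           -(γ y 1 0 * γ y 2 2) + γ y 1 2 * γ y 2 0,
           γ y 0 0 * γ y 2 2 - γ y 0 2 * γ y 2 0,
           -(γ y 0 0 * γ y 1 2) + γ y 0 2 * γ y 1 0;
           γ y 1 0 * γ y 2 1 - γ y 1 1 * γ y 2 0,
           -(γ y 0 0 * γ y 2 1) + γ y 0 1 * γ y 2 0,
           γ y 0 0 * γ y 1 1 - γ y 0 1 * γ y 1 0] μ ν := by
      funext y; rw [Matrix.adjugate_fin_three]
    rw [this]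
    have h := hγsmooth
    fin_cases μ <;> fin_cases ν <;> simp <;>
      first
      | exact ((h 1 1).mul (h 2 2)).sub ((h 1 2).mul (h 2 1))
      | exact (((h 0 1).mul (h 2 2)).neg).add ((h 0 2).mul (h 2 1))
      | exact ((h 0 1).mul (h 1 2)).sub ((h 0 2).mul (h 1 1))
      | exact (((h 1 0).mul (h 2 2)).neg).add ((h 1 2).mul (h 2 0))
      | exact ((h 0 0).mul (h 2 2)).sub ((h 0 2).mul (h 2 0))
      | exact (((h 0 0).mul (h 1 2)).neg).add ((h 0 2).mul (h 1 0))
      | exact ((h 1 0).mul (h 2 1)).sub ((h 1 1).mul (h 2 0))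
      | exact (((h 0 0).mul (h 2 1)).neg).add ((h 0 1).mul (h 2 0))
      | exact ((h 0 0).mul (h 1 1)).sub ((h 0 1).mul (h 1 0))
  have : (fun y => (γ y)⁻¹ μ ν) = fun y => ((γ y).det)⁻¹ * (γ y).adjugate μ ν := by
    funext y
    rw [Matrix.inv_def]
    simp [Matrix.smul_apply, smul_eq_mul, Ring.inverse_eq_inv']
  rw [this]
  exact ((contDiff_det γ hγsmooth).inv (fun y => (det_pos' γ hγpos y).ne')).mul hadj

lemma posdef_inv (hγpos : ∀ x, (γ x).PosDef) (x : E3) : ((γ x)⁻¹).PosDef := (hγpos x).inv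

lemma inv_diag_pos (hγpos : ∀ x, (γ x).PosDef) (x : E3) (μ : Fin 3) : 0 < (γ x)⁻¹ μ μ := by
  have h := posdef_inv γ hγpos x
  exact h.diag_pos


end gamma

/-- 1D second derivative test at a local max. -/
lemma second_deriv_nonpos {g g' : ℝ → ℝ} {c : ℝ}
    (hg : ∀ t, HasDerivAt g (g' t) t) (hg' : HasDerivAt g' c 0)
    (hmax : IsLocalMax g 0) : c ≤ 0 := by
  by_contra hc
  push_neg at hc
  have h0 : g' 0 = 0 := by
    have := hmax.deriv_eq_zero
    rwa [(hg 0).deriv] at this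
  -- g' t > 0 for small positive t
  have hslope : Tendsto (fun t => t⁻¹ * (g' t - g' 0)) (nhdsWithin 0 {0}ᶜ) (nhds c) := by
    have := hasDerivAt_iff_tendsto_slope.mp hg'
    simpa [slope_fun_def_field, slope_def_field, div_eq_inv_mul] using this
  have hev : ∀ᶠ t in nhdsWithin 0 (Set.Ioi 0), 0 < g' t := by
    have hsub : nhdsWithin (0:ℝ) (Set.Ioi 0) ≤ nhdsWithin 0 {0}ᶜ := by
      apply nhdsWithin_mono
      intro t ht
      exact ne_of_gt ht
    have h1 : ∀ᶠ t in nhdsWithin (0:ℝ) (Set.Ioi 0), c/2 < t⁻¹ * (g' t - g' 0) :=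
      (hslope.mono_left hsub).eventually (eventually_gt_nhds (half_lt_self hc))
    have h2 : ∀ᶠ t in nhdsWithin (0:ℝ) (Set.Ioi 0), 0 < t :=
      eventually_nhdsWithin_of_forall (fun t ht => ht)
    filter_upwards [h1, h2] with t h1 h2
    rw [h0, sub_zero] at h1
    have : 0 < t⁻¹ * g' t := lt_trans (by positivity) h1
    nlinarith [inv_pos.mpr h2]
  rw [eventually_nhdsWithin_iff] at hev
  rcases Metric.eventually_nhds_iff.mp hev with ⟨δ, hδ, hball⟩
  -- g is strictly monotone on [0, δ/2]
  have hmono : StrictMonoOn g (Set.Icc 0 (δ/2)) := by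
    apply strictMonoOn_of_deriv_pos (convex_Icc _ _)
    · exact Continuous.continuousOn (by
        have : Differentiable ℝ g := fun t => (hg t).differentiableAt
        exact this.continuous)
    · intro t ht
      rw [interior_Icc] at ht
      rw [(hg t).deriv]
      apply hball
      · rw [Real.dist_eq, sub_zero, abs_of_pos ht.1]
        linarith [ht.2, hδ]
      · exact ht.1
  -- contradiction with local max
  rcases Metric.eventually_nhds_iff.mp hmax with ⟨ε, hε, hmaxball⟩
  set t := min (δ/2) (ε/2) with ht
  have ht0 : 0 < t := lt_min (by linarith) (by linarith)
  have h1 : g 0 < g t := by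
    apply hmono (Set.mem_Icc.mpr ⟨le_refl 0, by positivity⟩)
      (Set.mem_Icc.mpr ⟨ht0.le, min_le_left _ _⟩) ht0
  have h2 : g t ≤ g 0 := by
    apply hmaxball
    rw [Real.dist_eq, sub_zero, abs_of_pos ht0]
    calc t ≤ ε/2 := min_le_right _ _
      _ < ε := by linarith
  linarith



/-- Second derivative of a smooth function along direction w at a local max is ≤ 0
    (expressed in coordinates). -/
lemma quad_form_nonpos {u : E3 → ℝ} (hu : ContDiff ℝ (⊤ : ℕ∞) u) {p : E3}
    (hmax : IsLocalMax u p) (w : Fin 3 → ℝ) :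
    ∑ μ, ∑ ν, w μ * w ν * pd3 μ (pd3 ν u) p ≤ 0 := by
  classical
  set wE : E3 := WithLp.toLp 2 (fun ν => w ν) with hwE
  have hud : Differentiable ℝ u := hu.differentiable (by simp)
  set h : E3 → ℝ := fun y => fderiv ℝ u y wE with hh
  have hhsmooth : ContDiff ℝ (⊤ : ℕ∞) h := (hu.fderiv_right (by simp)).clm_apply contDiff_const
  have hhd : Differentiable ℝ h := hhsmooth.differentiable (by simp)
  -- the line through p in direction wE
  set L : ℝ → E3 := fun t => p + t • wE with hL
  have hLd : ∀ t : ℝ, HasDerivAt L wE t := by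
    intro t
    have h1 : HasDerivAt (fun t : ℝ => t • wE) ((1:ℝ) • wE) t := (hasDerivAt_id t).smul_const wE
    simpa [hL] using h1.const_add p
  have hg : ∀ t, HasDerivAt (fun s => u (L s)) (h (L t)) t := by
    intro t
    exact ((hud (L t)).hasFDerivAt.comp_hasDerivAt t (hLd t))
  have hg' : HasDerivAt (fun t => h (L t)) (fderiv ℝ h p wE) 0 := by
    have := ((hhd (L 0)).hasFDerivAt.comp_hasDerivAt 0 (hLd 0))
    have hL0' : L 0 = p := by simp [hL]
    rw [hL0'] at this
    exact this
  have hmax' : IsLocalMax (fun s => u (L s)) 0 := by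
    have hcont : ContinuousAt L 0 := ((hLd 0).differentiableAt.continuousAt)
    have hL0 : L 0 = p := by simp [hL]
    unfold IsLocalMax IsMaxFilter at hmax ⊢
    have := hcont.tendsto
    rw [hL0] at this
    filter_upwards [this.eventually hmax] with t ht
    simpa [hL0] using ht
  have key : fderiv ℝ h p wE ≤ 0 := second_deriv_nonpos hg hg' hmax'
  -- identify fderiv h p wE with the coordinate expression
  have hid : fderiv ℝ h p wE = ∑ ν, ∑ μ, w ν * (w μ * pd3 μ (pd3 ν u) p) := by
    have hrw : h = fun y => ∑ ν, w ν * pd3 ν u y := by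
      funext y
      exact clm_apply_eq_sum (fderiv ℝ u y) wE
    rw [hrw]
    have hdiff : ∀ ν ∈ Finset.univ, DifferentiableAt ℝ (fun y => w ν * pd3 ν u y) p :=
      fun ν _ => (((contDiff_pd3 hu ν).differentiable (by simp)) p).const_mul _
    rw [fderiv_fun_sum hdiff]
    rw [ContinuousLinearMap.sum_apply]
    refine Finset.sum_congr rfl fun ν _ => ?_
    rw [fderiv_const_mul (((contDiff_pd3 hu ν).differentiable (by simp)) p)]
    rw [ContinuousLinearMap.smul_apply]
    rw [clm_apply_eq_sum (fderiv ℝ (pd3 ν u) p) wE]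
    simp only [smul_eq_mul, Finset.mul_sum]
    rfl
  calc ∑ μ, ∑ ν, w μ * w ν * pd3 μ (pd3 ν u) p
      = ∑ ν, ∑ μ, w ν * (w μ * pd3 μ (pd3 ν u) p) := by
        rw [Finset.sum_comm]
        exact Finset.sum_congr rfl fun ν _ => Finset.sum_congr rfl fun μ _ => by ring
    _ = fderiv ℝ h p wE := hid.symm
    _ ≤ 0 := key

open scoped MatrixOrder in
/-- Trace of a positive semidefinite matrix against the Hessian at a local max is ≤ 0. -/
lemma trace_hess_nonpos {u : E3 → ℝ} (hu : ContDiff ℝ (⊤ : ℕ∞) u) {p : E3}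
    (hmax : IsLocalMax u p) (A : Matrix (Fin 3) (Fin 3) ℝ) (hA : A.PosSemidef) :
    ∑ μ, ∑ ν, A μ ν * pd3 μ (pd3 ν u) p ≤ 0 := by
  classical
  set s := CFC.sqrt A with hs
  have hssymm : s.IsHermitian := (Matrix.nonneg_iff_posSemidef.mp (CFC.sqrt_nonneg A)).1
  have hsq : s * s = A := CFC.sqrt_mul_sqrt_self A hA.nonneg
  have hAapp : ∀ μ ν, A μ ν = ∑ k, s μ k * s ν k := by
    intro μ ν
    rw [← hsq, Matrix.mul_apply]
    refine Finset.sum_congr rfl fun k _ => ?_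
    have : s k ν = s ν k := by
      have := congrFun (congrFun hssymm.symm ν) k
      simpa [Matrix.conjTranspose_apply] using this.symm
    rw [this]
  calc ∑ μ, ∑ ν, A μ ν * pd3 μ (pd3 ν u) p
      = ∑ μ, ∑ ν, (∑ k, s μ k * s ν k) * pd3 μ (pd3 ν u) p := by
        exact Finset.sum_congr rfl fun μ _ => Finset.sum_congr rfl fun ν _ => by rw [hAapp]
    _ = ∑ μ, ∑ ν, ∑ k, s μ k * s ν k * pd3 μ (pd3 ν u) p := by
        exact Finset.sum_congr rfl fun μ _ => Finset.sum_congr rfl fun ν _ =>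
          Finset.sum_mul _ _ _
    _ = ∑ μ, ∑ k, ∑ ν, s μ k * s ν k * pd3 μ (pd3 ν u) p :=
        Finset.sum_congr rfl fun μ _ => Finset.sum_comm
    _ = ∑ k, ∑ μ, ∑ ν, (s μ k) * (s ν k) * pd3 μ (pd3 ν u) p := Finset.sum_comm
    _ ≤ 0 := by
        apply Finset.sum_nonpos
        intro k _
        exact quad_form_nonpos hu hmax (fun μ => s μ k)




section LB
variable {γ : E3 → Matrix (Fin 3) (Fin 3) ℝ}
variable (hγs : ∀ μ ν, ContDiff ℝ (⊤ : ℕ∞) fun x => γ x μ ν) (hγp : ∀ x, (γ x).PosDef)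
include hγs hγp

/-- Smoothness of the inner flux function of the Laplace-Beltrami operator. -/
lemma contDiff_flux {u : E3 → ℝ} (hu : ContDiff ℝ (⊤ : ℕ∞) u) (μ : Fin 3) :
    ContDiff ℝ (⊤ : ℕ∞) (fun y => Real.sqrt (γ y).det * ∑ ν, (γ y)⁻¹ μ ν * pd3 ν u y) := by
  refine (contDiff_sqrtDet γ hγs hγp).mul ?_
  refine ContDiff.sum fun ν _ => ?_
  exact (contDiff_inv_entry γ hγs hγp μ ν).mul (contDiff_pd3 hu ν)

lemma contDiff_c (μ ν : Fin 3) :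
    ContDiff ℝ (⊤ : ℕ∞) (fun y => Real.sqrt (γ y).det * (γ y)⁻¹ μ ν) :=
  (contDiff_sqrtDet γ hγs hγp).mul (contDiff_inv_entry γ hγs hγp μ ν)

-- Rewriting the flux as a sum of products with smooth coefficients.
omit hγs hγp in
lemma flux_eq (u : E3 → ℝ) (μ : Fin 3) :
    (fun y => Real.sqrt (γ y).det * ∑ ν, (γ y)⁻¹ μ ν * pd3 ν u y)
      = fun y => ∑ ν, (Real.sqrt (γ y).det * (γ y)⁻¹ μ ν) * pd3 ν u y := by
  funext y
  rw [Finset.mul_sum]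
  exact Finset.sum_congr rfl fun ν _ => by ring

/-- Value of the Laplace–Beltrami operator at a critical point. -/
lemma lb_at_critical {u : E3 → ℝ} (hu : ContDiff ℝ (⊤ : ℕ∞) u) {p : E3}
    (hcrit : ∀ ν, pd3 ν u p = 0) :
    laplaceBeltrami γ u p = ∑ μ, ∑ ν, (γ p)⁻¹ μ ν * pd3 μ (pd3 ν u) p := by
  unfold laplaceBeltrami
  have hsp := sqrtDet_pos γ hγp p
  have step : ∀ μ : Fin 3,
      pd3 μ (fun y => Real.sqrt (γ y).det * ∑ ν, (γ y)⁻¹ μ ν * pd3 ν u y) p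
        = ∑ ν, (Real.sqrt (γ p).det * (γ p)⁻¹ μ ν) * pd3 μ (pd3 ν u) p := by
    intro μ
    rw [flux_eq (γ := γ) u μ]
    rw [pd3_sum Finset.univ (F := fun ν y => Real.sqrt (γ y).det * (γ y)⁻¹ μ ν * pd3 ν u y) (fun ν _ =>
      (((contDiff_c hγs hγp μ ν).differentiable (by simp)) p).mul
        (diffAt_pd3 hu ν p)) μ]
    refine Finset.sum_congr rfl fun ν _ => ?_
    rw [pd3_mul (((contDiff_c hγs hγp μ ν).differentiable (by simp)) p) (diffAt_pd3 hu ν p) μ]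
    rw [hcrit ν]
    ring
  rw [Finset.sum_congr rfl fun μ _ => step μ]
  rw [Finset.mul_sum]
  refine Finset.sum_congr rfl fun μ _ => ?_
  rw [Finset.mul_sum]
  refine Finset.sum_congr rfl fun ν _ => ?_
  rw [← mul_assoc, ← mul_assoc, inv_mul_cancel₀ hsp.ne', one_mul]

/-- Linearity of the Laplace-Beltrami operator. -/
lemma lb_add_smul {u v : E3 → ℝ} (hu : ContDiff ℝ (⊤ : ℕ∞) u) (hv : ContDiff ℝ (⊤ : ℕ∞) v) (c : ℝ) (x : E3) :
    laplaceBeltrami γ (fun y => u y + c * v y) x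
      = laplaceBeltrami γ u x + c * laplaceBeltrami γ v x := by
  unfold laplaceBeltrami
  have hpd : ∀ (ν : Fin 3) (y : E3),
      pd3 ν (fun y => u y + c * v y) y = pd3 ν u y + c * pd3 ν v y := by
    intro ν y
    rw [pd3_add ((hu.differentiable (by simp)) y) ((((hv.differentiable (by simp)) y)).const_mul c) ν,
      pd3_const_mul ((hv.differentiable (by simp)) y) c ν]
  have hflux : ∀ (μ : Fin 3),
      (fun y => Real.sqrt (γ y).det * ∑ ν, (γ y)⁻¹ μ ν * pd3 ν (fun y => u y + c * v y) y)
        = fun y => (Real.sqrt (γ y).det * ∑ ν, (γ y)⁻¹ μ ν * pd3 ν u y)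
            + c * (Real.sqrt (γ y).det * ∑ ν, (γ y)⁻¹ μ ν * pd3 ν v y) := by
    intro μ
    funext y
    simp only [hpd]
    rw [Finset.mul_sum, Finset.mul_sum, Finset.mul_sum, Finset.mul_sum, ← Finset.sum_add_distrib]
    refine Finset.sum_congr rfl fun ν _ => by ring
  have hstep : ∀ μ : Fin 3,
      pd3 μ (fun y => Real.sqrt (γ y).det * ∑ ν, (γ y)⁻¹ μ ν * pd3 ν (fun y => u y + c * v y) y) x
        = pd3 μ (fun y => Real.sqrt (γ y).det * ∑ ν, (γ y)⁻¹ μ ν * pd3 ν u y) x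
          + c * pd3 μ (fun y => Real.sqrt (γ y).det * ∑ ν, (γ y)⁻¹ μ ν * pd3 ν v y) x := by
    intro μ
    rw [hflux μ]
    have h1 := ((contDiff_flux hγs hγp hu μ).differentiable (by simp)) x
    have h2 := ((contDiff_flux hγs hγp hv μ).differentiable (by simp)) x
    rw [pd3_add h1 (h2.const_mul c) μ, pd3_const_mul h2 c μ]
  rw [Finset.sum_congr rfl fun μ _ => hstep μ]
  rw [Finset.sum_add_distrib, ← Finset.mul_sum]
  ring

-- Derivative of the exponential test function.
omit hγs hγp in
lemma pd3_expfun (lam : ℝ) (ν : Fin 3) (y : E3) :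
    pd3 ν (fun z => Real.exp (lam * z 0)) y
      = lam * Real.exp (lam * y 0) * (if ν = 0 then 1 else 0) := by
  have heq : (fun z : E3 => z 0) = ⇑(EuclideanSpace.proj (0 : Fin 3) : E3 →L[ℝ] ℝ) := by
    funext z; simp
  have hproj : HasFDerivAt (fun z : E3 => z 0) (EuclideanSpace.proj (0 : Fin 3) : E3 →L[ℝ] ℝ) y := by
    rw [heq]; exact (EuclideanSpace.proj (0 : Fin 3) : E3 →L[ℝ] ℝ).hasFDerivAt
  have hg : HasFDerivAt (fun z : E3 => lam * z 0)
      (lam • (EuclideanSpace.proj (0 : Fin 3) : E3 →L[ℝ] ℝ)) y := hproj.const_mul lam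
  have hexp : HasFDerivAt (fun z : E3 => Real.exp (lam * z 0))
      (Real.exp (lam * y 0) • (lam • (EuclideanSpace.proj (0 : Fin 3) : E3 →L[ℝ] ℝ))) y :=
    hg.exp
  unfold pd3
  rw [hexp.fderiv]
  simp only [ContinuousLinearMap.smul_apply, smul_eq_mul]
  have : (EuclideanSpace.proj (0 : Fin 3) : E3 →L[ℝ] ℝ) (EuclideanSpace.single ν 1)
      = if ν = 0 then 1 else 0 := by
    by_cases hν : ν = 0
    · subst hν; simp
    · simp [EuclideanSpace.single_apply, hν, Ne.symm hν]
  rw [this]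
  ring

omit hγs hγp in
lemma contDiff_expfun (lam : ℝ) : ContDiff ℝ (⊤ : ℕ∞) fun z : E3 => Real.exp (lam * z 0) :=
  Real.contDiff_exp.comp (contDiff_const.mul (by fun_prop))

/-- The Laplace-Beltrami operator applied to the exponential test function. -/
lemma lb_expfun (lam : ℝ) (y : E3) :
    laplaceBeltrami γ (fun z => Real.exp (lam * z 0)) y
      = lam * Real.exp (lam * y 0) *
          (lam * (γ y)⁻¹ 0 0
            + (Real.sqrt (γ y).det)⁻¹ *
                ∑ μ, pd3 μ (fun z => Real.sqrt (γ z).det * (γ z)⁻¹ μ 0) y) := by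
  have hsp := sqrtDet_pos γ hγp y
  unfold laplaceBeltrami
  have hfluxeq : ∀ μ : Fin 3,
      (fun z => Real.sqrt (γ z).det * ∑ ν, (γ z)⁻¹ μ ν * pd3 ν (fun w => Real.exp (lam * w 0)) z)
        = fun z => lam * ((Real.sqrt (γ z).det * (γ z)⁻¹ μ 0) * Real.exp (lam * z 0)) := by
    intro μ
    funext z
    simp only [pd3_expfun lam, Fin.sum_univ_three,
      if_pos (rfl : (0:Fin 3) = 0), if_neg (by decide : ¬(1:Fin 3) = 0),
      if_neg (by decide : ¬(2:Fin 3) = 0), eq_self_iff_true, if_true]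
    ring
  have hstep : ∀ μ : Fin 3,
      pd3 μ (fun z => Real.sqrt (γ z).det * ∑ ν, (γ z)⁻¹ μ ν * pd3 ν (fun w => Real.exp (lam * w 0)) z) y
        = lam * (pd3 μ (fun z => Real.sqrt (γ z).det * (γ z)⁻¹ μ 0) y * Real.exp (lam * y 0)
            + (Real.sqrt (γ y).det * (γ y)⁻¹ μ 0) *
                (lam * Real.exp (lam * y 0) * (if μ = 0 then 1 else 0))) := by
    intro μ
    rw [hfluxeq μ]
    have hc := ((contDiff_c hγs hγp μ 0).differentiable (by simp)) y
    have hE := ((contDiff_expfun lam).differentiable (by simp)) y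
    rw [pd3_const_mul (F := fun z => Real.sqrt (γ z).det * (γ z)⁻¹ μ 0 * Real.exp (lam * z 0)) (hc.mul hE) lam μ, pd3_mul hc hE μ, pd3_expfun lam μ y]
  rw [Finset.sum_congr rfl fun μ _ => hstep μ]
  simp only [Fin.sum_univ_three, if_pos (rfl : (0:Fin 3) = 0),
    if_neg (by decide : ¬(1:Fin 3) = 0), if_neg (by decide : ¬(2:Fin 3) = 0),
    eq_self_iff_true, if_true]
  field_simp
  ring

/-- The maximum principle: a solution of `Δ_γ β = f β` with `f ≥ 0` tending to `0`
at infinity is nonpositive. -/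
lemma sol_nonpos (f : E3 → ℝ) (hf0 : ∀ x, 0 ≤ f x) {β : E3 → ℝ} (hβ : ContDiff ℝ (⊤ : ℕ∞) β)
    (hPDE : ∀ x, laplaceBeltrami γ β x = f x * β x)
    (h0 : Tendsto β (cocompact E3) (nhds 0)) : ∀ x, β x ≤ 0 := by
  by_contra hcon
  push_neg at hcon
  obtain ⟨x₀, hx₀⟩ := hcon
  set M := β x₀ with hM
  -- a compact set outside which |β| < M/2
  have hev : ∀ᶠ y in cocompact E3, dist (β y) 0 < M / 2 :=
    Metric.tendsto_nhds.mp h0 (M / 2) (by positivity)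
  rw [Filter.eventually_iff, mem_cocompact] at hev
  obtain ⟨K, hK, hKsub⟩ := hev
  obtain ⟨R₀, hR₀⟩ := hK.isBounded.subset_closedBall 0
  set R : ℝ := max (R₀ + 1) (‖x₀‖ + 1) with hR
  have hRpos : 0 < R := lt_of_lt_of_le (by positivity) (le_max_right _ _)
  have hx₀B : x₀ ∈ Metric.closedBall (0 : E3) R := by
    rw [Metric.mem_closedBall, dist_zero_right]
    calc ‖x₀‖ ≤ ‖x₀‖ + 1 := by linarith
      _ ≤ R := le_max_right _ _
  have hout : ∀ y : E3, ‖y‖ = R → |β y| < M / 2 := by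
    intro y hy
    have hyK : y ∉ K := by
      intro hyK
      have := hR₀ hyK
      rw [Metric.mem_closedBall, dist_zero_right] at this
      have : R ≤ R₀ := hy ▸ this
      have : R₀ + 1 ≤ R₀ := le_trans (le_max_left _ _) this
      linarith
    have := hKsub hyK
    rwa [Set.mem_setOf_eq, dist_zero_right, Real.norm_eq_abs] at this
  set B := Metric.closedBall (0 : E3) R with hB
  have hcomp : IsCompact B := ProperSpace.isCompact_closedBall 0 R
  have hBne : B.Nonempty := ⟨x₀, hx₀B⟩
  -- lower bound for (γ y)⁻¹ 0 0 on B
  set g00 : E3 → ℝ := fun y => (γ y)⁻¹ 0 0 with hg00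
  have hg00c : Continuous g00 := (contDiff_inv_entry γ hγs hγp 0 0).continuous
  obtain ⟨z, hzB, hzmin⟩ := hcomp.exists_isMinOn hBne hg00c.continuousOn
  set c : ℝ := g00 z with hc
  have hcpos : 0 < c := inv_diag_pos γ hγp z 0
  have hcle : ∀ y ∈ B, c ≤ g00 y := fun y hy => hzmin hy
  -- bound for the first-order coefficient on B
  set Gfun : E3 → ℝ := fun y => (Real.sqrt (γ y).det)⁻¹ *
      ∑ μ, pd3 μ (fun w => Real.sqrt (γ w).det * (γ w)⁻¹ μ 0) y with hGfun
  have hGc : Continuous Gfun := by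
    apply Continuous.mul
    · exact ((contDiff_sqrtDet γ hγs hγp).continuous).inv₀
        (fun y => (sqrtDet_pos γ hγp y).ne')
    · exact continuous_finset_sum _ fun μ _ =>
        (contDiff_pd3 (contDiff_c hγs hγp μ 0) μ).continuous
  obtain ⟨C, hC⟩ := hcomp.exists_bound_of_continuousOn hGc.continuousOn
  set lam : ℝ := (|C| + 1) / c with hlam
  have hlampos : 0 < lam := by positivity
  have hcoeff : ∀ y ∈ B, 1 ≤ lam * g00 y + Gfun y := by
    intro y hy
    have h1 : lam * c ≤ lam * g00 y := by
      apply mul_le_mul_of_nonneg_left (hcle y hy) hlampos.le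
    have h2 : lam * c = |C| + 1 := by
      rw [hlam]; field_simp
    have h3 : -(|C|) ≤ Gfun y := by
      have := hC y hy
      rw [Real.norm_eq_abs] at this
      have := abs_le.mp (le_trans this (le_abs_self C))
      linarith [this.1]
    linarith
  -- the exponential test function
  set Efun : E3 → ℝ := fun y => Real.exp (lam * y 0) with hEfun
  have hEpos : ∀ y, 0 < Efun y := fun y => Real.exp_pos _
  have hEc : Continuous Efun := (contDiff_expfun lam).continuous
  obtain ⟨CE, hCE⟩ := hcomp.exists_bound_of_continuousOn (f := Efun) hEc.continuousOn
  have hCE0 : 0 ≤ CE := le_trans (norm_nonneg _) (hCE x₀ hx₀B)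
  set ε : ℝ := (M / 2) / (CE + 1) with hε
  have hεpos : 0 < ε := by positivity
  have hεE : ∀ y ∈ B, ε * Efun y < M / 2 := by
    intro y hy
    have h1 : Efun y ≤ CE := le_trans (le_abs_self _)
      (by simpa [Real.norm_eq_abs] using hCE y hy)
    have h2 : ε * Efun y ≤ ε * CE := mul_le_mul_of_nonneg_left h1 hεpos.le
    have h3 : ε * CE < M / 2 := by
      rw [hε]
      rw [div_mul_eq_mul_div, div_lt_iff₀ (by positivity)]
      have : 0 < M / 2 := by positivity
      nlinarith
    linarith
  -- the perturbed function and its max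
  set u : E3 → ℝ := fun y => β y + ε * Efun y with hu
  have husmooth : ContDiff ℝ (⊤ : ℕ∞) u := hβ.add (contDiff_const.mul (contDiff_expfun lam))
  obtain ⟨p, hpB, hpmax⟩ := hcomp.exists_isMaxOn hBne (husmooth.continuous).continuousOn
  have hup : M < u p := by
    have h1 : u x₀ ≤ u p := hpmax hx₀B
    have h2 : M < u x₀ := by
      have := hEpos x₀
      rw [hu]
      simp only [hM]
      nlinarith
    linarith
  have hpin : ‖p‖ < R := by
    rcases lt_or_eq_of_le (by rwa [Metric.mem_closedBall, dist_zero_right] at hpB) with h | h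
    · exact h
    · exfalso
      have hβp := hout p h
      have hE := hεE p hpB
      have : u p < M := by
        have := abs_lt.mp hβp
        rw [hu]
        simp only []
        linarith [this.2]
      linarith
  have hlocmax : IsLocalMax u p := by
    apply hpmax.isLocalMax
    rw [hB]
    exact Metric.closedBall_mem_nhds_of_mem
      (by rw [Metric.mem_ball, dist_zero_right]; exact hpin)
  have hcrit : ∀ ν, pd3 ν u p = 0 := by
    intro ν
    unfold pd3
    rw [hlocmax.fderiv_eq_zero]
    rfl
  -- positivity of β at p
  have hβppos : 0 < β p := by
    have h1 := hεE p hpB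
    have : u p = β p + ε * Efun p := rfl
    nlinarith [hEpos p]
  -- the two evaluations of Δu at p
  have heval : laplaceBeltrami γ u p
      = f p * β p + ε * (lam * Efun p * (lam * g00 p + Gfun p)) := by
    have h1 := lb_add_smul hγs hγp hβ (contDiff_expfun lam) ε p
    have h2 := lb_expfun hγs hγp lam p
    rw [hu]
    rw [h1, hPDE p, h2]
    try rw [hGfun, hg00, hEfun]
    try ring
  have hpos : 0 < laplaceBeltrami γ u p := by
    rw [heval]
    have h1 : 0 ≤ f p * β p := mul_nonneg (hf0 p) hβppos.le
    have h2 : 0 < lam * Efun p * (lam * g00 p + Gfun p) :=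
      mul_pos (mul_pos hlampos (hEpos p))
        (lt_of_lt_of_le zero_lt_one (hcoeff p hpB))
    nlinarith
  have hneg : laplaceBeltrami γ u p ≤ 0 := by
    rw [lb_at_critical hγs hγp husmooth hcrit]
    exact trace_hess_nonpos husmooth hlocmax ((γ p)⁻¹) (posdef_inv γ hγp p).posSemidef
  linarith

-- derivative of a composition with the rotation
omit hγs hγp in
lemma pd3_comp_rot {g : E3 → ℝ} (hg : Differentiable ℝ g) (φ : ℝ) (μ : Fin 3) (x : E3) :
    pd3 μ (fun y => g (rotZPt φ y)) x = ∑ ρ, rotZ φ ρ μ * pd3 ρ g (rotZPt φ x) := by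
  have hcomp : (fun y => g (rotZPt φ y)) = g ∘ (rotCLM φ) := rfl
  unfold pd3
  rw [hcomp, fderiv_comp x (hg _) ((rotCLM φ).differentiable x)]
  rw [(rotCLM φ).fderiv]
  rw [ContinuousLinearMap.comp_apply, rotCLM_single]
  rw [clm_apply_eq_sum (fderiv ℝ g (rotCLM φ x)) _]
  rfl

omit hγs hγp in
lemma det_rot (hγaxi : ∀ φ x, γ (rotZPt φ x) = rotZ φ * γ x * (rotZ φ)ᵀ) (φ : ℝ) (y : E3) :
    (γ (rotZPt φ y)).det = (γ y).det := by
  rw [hγaxi φ y, Matrix.det_mul, Matrix.det_mul, Matrix.det_transpose, det_rotZ]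
  ring

omit hγs hγp in
lemma inv_rot (hγaxi : ∀ φ x, γ (rotZPt φ x) = rotZ φ * γ x * (rotZ φ)ᵀ) (φ : ℝ) (y : E3) :
    (γ (rotZPt φ y))⁻¹ = rotZ φ * (γ y)⁻¹ * (rotZ φ)ᵀ := by
  rw [hγaxi φ y, Matrix.mul_inv_rev, Matrix.mul_inv_rev, rotZ_inv, rotZ_transpose_inv]
  rw [Matrix.mul_assoc]

omit hγs hγp in
lemma inv_rot_entry (hγaxi : ∀ φ x, γ (rotZPt φ x) = rotZ φ * γ x * (rotZ φ)ᵀ)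
    (φ : ℝ) (y : E3) (μ σ : Fin 3) :
    ∑ ν, (γ y)⁻¹ μ ν * rotZ φ σ ν = ∑ ρ, rotZ φ ρ μ * (γ (rotZPt φ y))⁻¹ ρ σ := by
  have h : (γ y)⁻¹ * (rotZ φ)ᵀ = (rotZ φ)ᵀ * (γ (rotZPt φ y))⁻¹ := by
    rw [inv_rot hγaxi φ y]
    rw [← Matrix.mul_assoc, ← Matrix.mul_assoc, transpose_mul_rotZ, Matrix.one_mul]
  have h2 := congrFun (congrFun h μ) σ
  simp only [Matrix.mul_apply, Matrix.transpose_apply] at h2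
  exact h2

omit hγs hγp in
lemma horth (φ : ℝ) (ρ τ : Fin 3) :
    ∑ μ, rotZ φ ρ μ * rotZ φ τ μ = if ρ = τ then 1 else 0 := by
  have := congrFun (congrFun (rotZ_mul_transpose φ) ρ) τ
  simp only [Matrix.mul_apply, Matrix.transpose_apply, Matrix.one_apply] at this
  exact this

/-- Invariance of the Laplace-Beltrami operator under the rotations. -/
lemma lb_rot (hγaxi : ∀ φ x, γ (rotZPt φ x) = rotZ φ * γ x * (rotZ φ)ᵀ)
    {α : E3 → ℝ} (hα : ContDiff ℝ (⊤ : ℕ∞) α) (φ : ℝ) (x : E3) :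
    laplaceBeltrami γ (fun y => α (rotZPt φ y)) x = laplaceBeltrami γ α (rotZPt φ x) := by
  have hαd : Differentiable ℝ α := hα.differentiable (by simp)
  -- the flux functions of α
  set H : Fin 3 → E3 → ℝ :=
    fun ρ z => Real.sqrt (γ z).det * ∑ σ, (γ z)⁻¹ ρ σ * pd3 σ α z with hH
  have hHsmooth : ∀ ρ, ContDiff ℝ (⊤ : ℕ∞) (H ρ) := fun ρ => contDiff_flux hγs hγp hα ρ
  -- step 1: rewrite the flux of the composition
  have claim1 : ∀ μ : Fin 3,
      (fun y => Real.sqrt (γ y).det *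
          ∑ ν, (γ y)⁻¹ μ ν * pd3 ν (fun w => α (rotZPt φ w)) y)
        = fun y => ∑ ρ, rotZ φ ρ μ * H ρ (rotZPt φ y) := by
    intro μ
    funext y
    have hdet : (γ (rotZPt φ y)).det = (γ y).det := det_rot hγaxi φ y
    calc Real.sqrt (γ y).det * ∑ ν, (γ y)⁻¹ μ ν * pd3 ν (fun w => α (rotZPt φ w)) y
        = Real.sqrt (γ y).det * ∑ ν, (γ y)⁻¹ μ ν *
            ∑ σ, rotZ φ σ ν * pd3 σ α (rotZPt φ y) := by
          rw [Finset.sum_congr rfl fun ν _ => by rw [pd3_comp_rot hαd φ ν y]]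
      _ = ∑ ν, ∑ σ, ((γ y)⁻¹ μ ν * rotZ φ σ ν) *
            (Real.sqrt (γ y).det * pd3 σ α (rotZPt φ y)) := by
          rw [Finset.mul_sum]
          refine Finset.sum_congr rfl fun ν _ => ?_
          rw [Finset.mul_sum, Finset.mul_sum]
          exact Finset.sum_congr rfl fun σ _ => by ring
      _ = ∑ σ, ∑ ν, ((γ y)⁻¹ μ ν * rotZ φ σ ν) *
            (Real.sqrt (γ y).det * pd3 σ α (rotZPt φ y)) := Finset.sum_comm
      _ = ∑ σ, (∑ ν, (γ y)⁻¹ μ ν * rotZ φ σ ν) *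
            (Real.sqrt (γ y).det * pd3 σ α (rotZPt φ y)) := by
          exact Finset.sum_congr rfl fun σ _ => (Finset.sum_mul _ _ _).symm
      _ = ∑ σ, (∑ ρ, rotZ φ ρ μ * (γ (rotZPt φ y))⁻¹ ρ σ) *
            (Real.sqrt (γ (rotZPt φ y)).det * pd3 σ α (rotZPt φ y)) := by
          refine Finset.sum_congr rfl fun σ _ => ?_
          rw [inv_rot_entry hγaxi φ y μ σ, hdet]
      _ = ∑ σ, ∑ ρ, (rotZ φ ρ μ * (γ (rotZPt φ y))⁻¹ ρ σ) *
            (Real.sqrt (γ (rotZPt φ y)).det * pd3 σ α (rotZPt φ y)) := by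
          exact Finset.sum_congr rfl fun σ _ => Finset.sum_mul _ _ _
      _ = ∑ ρ, ∑ σ, (rotZ φ ρ μ * (γ (rotZPt φ y))⁻¹ ρ σ) *
            (Real.sqrt (γ (rotZPt φ y)).det * pd3 σ α (rotZPt φ y)) := Finset.sum_comm
      _ = ∑ ρ, rotZ φ ρ μ * H ρ (rotZPt φ y) := by
          refine Finset.sum_congr rfl fun ρ _ => ?_
          rw [hH]
          simp only []
          rw [Finset.mul_sum, Finset.mul_sum]
          exact Finset.sum_congr rfl fun σ _ => by ring
  -- step 2: differentiate
  have claim2 : ∀ μ : Fin 3,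
      pd3 μ (fun y => ∑ ρ, rotZ φ ρ μ * H ρ (rotZPt φ y)) x
        = ∑ ρ, rotZ φ ρ μ * ∑ τ, rotZ φ τ μ * pd3 τ (H ρ) (rotZPt φ x) := by
    intro μ
    have hdiff : ∀ ρ : Fin 3, DifferentiableAt ℝ (fun y => H ρ (rotZPt φ y)) x := by
      intro ρ
      have : ContDiff ℝ (⊤ : ℕ∞) (fun y => H ρ (rotZPt φ y)) :=
        (hHsmooth ρ).comp (rotCLM φ).contDiff
      exact (this.differentiable (by simp)) x
    rw [pd3_sum Finset.univ (fun ρ _ => ((hdiff ρ).const_mul _)) μ]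
    refine Finset.sum_congr rfl fun ρ _ => ?_
    rw [pd3_const_mul (hdiff ρ) _ μ]
    rw [pd3_comp_rot ((hHsmooth ρ).differentiable (by simp)) φ μ x]
  -- step 3: sum over μ and use orthogonality
  have claim3 :
      ∑ μ, ∑ ρ, rotZ φ ρ μ * ∑ τ, rotZ φ τ μ * pd3 τ (H ρ) (rotZPt φ x)
        = ∑ ρ, pd3 ρ (H ρ) (rotZPt φ x) := by
    calc ∑ μ, ∑ ρ, rotZ φ ρ μ * ∑ τ, rotZ φ τ μ * pd3 τ (H ρ) (rotZPt φ x)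
        = ∑ μ, ∑ ρ, ∑ τ, (rotZ φ ρ μ * rotZ φ τ μ) * pd3 τ (H ρ) (rotZPt φ x) := by
          refine Finset.sum_congr rfl fun μ _ => Finset.sum_congr rfl fun ρ _ => ?_
          rw [Finset.mul_sum]
          exact Finset.sum_congr rfl fun τ _ => by ring
      _ = ∑ ρ, ∑ μ, ∑ τ, (rotZ φ ρ μ * rotZ φ τ μ) * pd3 τ (H ρ) (rotZPt φ x) :=
          Finset.sum_comm
      _ = ∑ ρ, ∑ τ, ∑ μ, (rotZ φ ρ μ * rotZ φ τ μ) * pd3 τ (H ρ) (rotZPt φ x) :=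
          Finset.sum_congr rfl fun ρ _ => Finset.sum_comm
      _ = ∑ ρ, ∑ τ, (if ρ = τ then (1:ℝ) else 0) * pd3 τ (H ρ) (rotZPt φ x) := by
          refine Finset.sum_congr rfl fun ρ _ => Finset.sum_congr rfl fun τ _ => ?_
          rw [← Finset.sum_mul, horth φ ρ τ]
      _ = ∑ ρ, pd3 ρ (H ρ) (rotZPt φ x) := by
          refine Finset.sum_congr rfl fun ρ _ => ?_
          rw [Finset.sum_congr rfl fun τ _ => ite_mul (α := ℝ) _ _ _ _]
          simp [Finset.sum_ite_eq]
  -- conclusion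
  unfold laplaceBeltrami
  rw [Finset.sum_congr rfl fun μ _ => by rw [claim1 μ]]
  rw [Finset.sum_congr rfl fun μ _ => claim2 μ]
  rw [claim3, det_rot hγaxi φ x]

end LB


end AUX

theorem stmt1
    (γ : EuclideanSpace ℝ (Fin 3) → Matrix (Fin 3) (Fin 3) ℝ)
    (f : EuclideanSpace ℝ (Fin 3) → ℝ)
    (hγsmooth : ∀ μ ν, ContDiff ℝ (⊤ : ℕ∞) fun x => γ x μ ν)
    (hγsym : ∀ x, (γ x).IsSymm)
    (hγpos : ∀ x, (γ x).PosDef)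
    (hγdecay : ∀ μ ν, ∀ m : ℕ,
      (fun x => ‖iteratedFDeriv ℝ m (fun y => γ y μ ν - if μ = ν then 1 else 0) x‖)
        =o[cocompact (EuclideanSpace ℝ (Fin 3))] fun x => ‖x‖ ^ ((-1/2 : ℝ) - m))
    (hfsmooth : ContDiff ℝ (⊤ : ℕ∞) f)
    (hfnonneg : ∀ x, 0 ≤ f x)
    (hfdecay : ∀ m : ℕ,
      (fun x => ‖iteratedFDeriv ℝ m f x‖)
        =o[cocompact (EuclideanSpace ℝ (Fin 3))] fun x => ‖x‖ ^ ((-3 : ℝ) - m))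
    -- axial symmetry of the data
    (hγaxi : ∀ φ : ℝ, ∀ x, γ (rotZPt φ x) = rotZ φ * γ x * (rotZ φ).transpose)
    (hfaxi : ∀ φ : ℝ, ∀ x, f (rotZPt φ x) = f x) :
    ∀ α : EuclideanSpace ℝ (Fin 3) → ℝ,
      (ContDiff ℝ (⊤ : ℕ∞) α ∧
        (∀ x, laplaceBeltrami γ α x = f x * α x) ∧
        Tendsto α (cocompact (EuclideanSpace ℝ (Fin 3))) (nhds 1)) →
      ∀ φ : ℝ, ∀ x, α (rotZPt φ x) = α x := by
  rintro α ⟨hα1, hα2, hα3⟩ φ x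
  -- the rotated solution
  set αR : E3 → ℝ := fun y => α (rotZPt φ y) with hαR
  have hαRsmooth : ContDiff ℝ (⊤ : ℕ∞) αR := hα1.comp (rotCLM φ).contDiff
  have hαRpde : ∀ y, laplaceBeltrami γ αR y = f y * αR y := by
    intro y
    rw [hαR]
    rw [lb_rot hγsmooth hγpos hγaxi hα1 φ y]
    rw [hα2 (rotZPt φ y), hfaxi φ y]
  have hαRtend : Tendsto αR (cocompact E3) (nhds 1) :=
    hα3.comp (tendsto_rotZPt_cocompact φ)
  -- the two differences
  have key : ∀ u v : E3 → ℝ, ContDiff ℝ (⊤ : ℕ∞) u → ContDiff ℝ (⊤ : ℕ∞) v →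
      (∀ y, laplaceBeltrami γ u y = f y * u y) →
      (∀ y, laplaceBeltrami γ v y = f y * v y) →
      Tendsto u (cocompact E3) (nhds 1) → Tendsto v (cocompact E3) (nhds 1) →
      ∀ y, u y + (-1) * v y ≤ 0 := by
    intro u v hu hv hupde hvpde hut hvt
    apply sol_nonpos hγsmooth hγpos f hfnonneg
      (hu.add (contDiff_const.mul hv))
    · intro y
      rw [lb_add_smul hγsmooth hγpos hu hv (-1) y, hupde y, hvpde y]
      ring
    · have : Tendsto (fun y => u y + (-1) * v y) (cocompact E3)
          (nhds (1 + (-1) * 1)) := hut.add (hvt.const_mul (-1))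
      simpa using this
  have h1 := key αR α hαRsmooth hα1 hαRpde hα2 hαRtend hα3 x
  have h2 := key α αR hα1 hαRsmooth hα2 hαRpde hα3 hαRtend x
  have : αR x = α x := by linarith
  exact this

end
end

section
/- Let u : ℝ² → ℝ be twice continuously differentiable, suppose the gradient satisfies |∇u(x)| = o(|x|^{−1}) as |x| → ∞, and suppose Δu = ∂²u/∂x₁² + ∂²u/∂x₂² is Lebesgue integrable on ℝ². Then ∫_{ℝ²} Δu dx = 0. -/
/-! By the divergence theorem, the integral of `Δu = div ∇u` over the square `[-R, R]²` is the
flux of `∇u` through its boundary. The boundary has length `8R` while `|∇u| = o(1/R)` on it, so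
the flux tends to `0`; as `Δu` is integrable, the integrals over the squares tend to `∫ Δu`.
In `ℝⁿ⁺¹` the same works for any field that is `o(|x|^{-n})`, the faces having area `(2R)ⁿ`. -/

open Real Filter Asymptotics MeasureTheory

noncomputable section

/-- Partial derivative of a scalar function on ℝ² in the i-th coordinate direction. -/
def pd2 (i : Fin 2) (g : EuclideanSpace ℝ (Fin 2) → ℝ) (x : EuclideanSpace ℝ (Fin 2)) : ℝ :=
  fderiv ℝ g x (EuclideanSpace.single i 1)

open Set Topology

variable {E : Type*} [NormedAddCommGroup E]

lemma norm_setIntegral_Icc_neg_self_le [NormedSpace ℝ E] {ι : Type*} [Fintype ι]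
    {g : (ι → ℝ) → E} {R C : ℝ} (hR : 0 ≤ R)
    (hC : ∀ x ∈ Icc (fun _ => -R) (fun _ => R), ‖g x‖ ≤ C) :
    ‖∫ x in Icc (fun _ : ι => -R) (fun _ => R), g x‖ ≤ (2 * R) ^ Fintype.card ι * C := by
  have hvol : volume.real (Icc (fun _ : ι => -R) fun _ => R) = (2 * R) ^ Fintype.card ι := by
    rw [measureReal_def, Real.volume_Icc_pi_toReal fun _ => neg_le_self hR]
    simp [two_mul]
  calc ‖∫ x in Icc (fun _ : ι => -R) (fun _ => R), g x‖
      ≤ C * volume.real (Icc (fun _ : ι => -R) fun _ => R) :=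
        norm_setIntegral_le_of_norm_le_const (by simp [Real.volume_Icc_pi]) hC
    _ = (2 * R) ^ Fintype.card ι * C := by rw [hvol, mul_comm]

lemma eventually_norm_le_of_isLittleO_inv_pow {F : Type*} [NormedAddCommGroup F] [ProperSpace F]
    {g : F → E} {n : ℕ} (hg : g =o[cocompact F] fun x => (‖x‖ ^ n)⁻¹) {ε : ℝ} (hε : 0 < ε) :
    ∀ᶠ R in atTop, ∀ x, R ≤ ‖x‖ → ‖g x‖ ≤ ε * (R ^ n)⁻¹ := by
  have hev := hg.def hε
  rw [← Metric.cobounded_eq_cocompact,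
    (Metric.hasBasis_cobounded_compl_closedBall (0 : F)).eventually_iff] at hev
  obtain ⟨r, -, hr⟩ := hev
  filter_upwards [eventually_gt_atTop (max r 0)] with R hR x hx
  have hRpos : 0 < R := (le_max_right r 0).trans_lt hR
  have hxr : x ∈ (Metric.closedBall 0 r)ᶜ := by
    simpa using (le_max_left r 0).trans_lt (hR.trans_le hx)
  calc ‖g x‖ ≤ ε * ‖(‖x‖ ^ n)⁻¹‖ := hr hxr
    _ = ε * (‖x‖ ^ n)⁻¹ := by rw [norm_inv, norm_pow, norm_norm]
    _ ≤ ε * (R ^ n)⁻¹ := by gcongr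

section Box

variable [NormedSpace ℝ E] {n : ℕ}

/-- The outward flux of `f` through the boundary of `[-R, R]ⁿ⁺¹`, written face by face as in
`MeasureTheory.integral_divergence_of_hasFDerivAt_off_countable'`. -/
def boxFlux (f : Fin (n + 1) → (Fin (n + 1) → ℝ) → E) (R : ℝ) : E :=
  ∑ i : Fin (n + 1),
    ((∫ x in Icc (fun _ : Fin n => -R) (fun _ => R), f i (i.insertNth R x)) -
      ∫ x in Icc (fun _ : Fin n => -R) (fun _ => R), f i (i.insertNth (-R) x))

lemma setIntegral_Icc_neg_self_divergence_eq_boxFlux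
    {f : Fin (n + 1) → (Fin (n + 1) → ℝ) → E}
    {f' : Fin (n + 1) → (Fin (n + 1) → ℝ) → (Fin (n + 1) → ℝ) →L[ℝ] E}
    (hf : ∀ i x, HasFDerivAt (f i) (f' i x) x)
    (hint : Integrable fun x => ∑ i, f' i x (Pi.single i 1)) {R : ℝ} (hR : 0 ≤ R) :
    ∫ x in Icc (fun _ => -R) (fun _ => R), ∑ i, f' i x (Pi.single i 1) = boxFlux f R :=
  integral_divergence_of_hasFDerivAt_off_countable' _ _ (fun _ => neg_le_self hR) f f' ∅
    countable_empty (fun i => (continuous_iff_continuousAt.2 fun x =>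
      (hf i x).continuousAt).continuousOn) (fun x _ i => hf i x) hint.integrableOn

lemma tendsto_setIntegral_face_zero {g : (Fin (n + 1) → ℝ) → E}
    (hg : g =o[cocompact _] fun x => (‖x‖ ^ n)⁻¹) (i : Fin (n + 1)) {c : ℝ → ℝ}
    (hc : ∀ R, |c R| = |R|) :
    Tendsto (fun R => ∫ x in Icc (fun _ : Fin n => -R) (fun _ => R), g (i.insertNth (c R) x))
      atTop (𝓝 0) := by
  rw [NormedAddGroup.tendsto_nhds_zero]
  intro ε hε
  have hε' : 0 < ε / 2 ^ (n + 1) := by positivity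
  filter_upwards [eventually_norm_le_of_isLittleO_inv_pow hg hε', eventually_gt_atTop 0]
    with R hbound hR
  have hface : ∀ x ∈ Icc (fun _ : Fin n => -R) (fun _ => R),
      ‖g (i.insertNth (c R) x)‖ ≤ ε / 2 ^ (n + 1) * (R ^ n)⁻¹ := by
    refine fun x _ => hbound _ ?_
    calc R = |c R| := by rw [hc, abs_of_pos hR]
      _ = ‖(i.insertNth (c R) x : Fin (n + 1) → ℝ) i‖ := by simp
      _ ≤ ‖(i.insertNth (c R) x : Fin (n + 1) → ℝ)‖ := norm_le_pi_norm _ i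
  calc ‖∫ x in Icc (fun _ : Fin n => -R) (fun _ => R), g (i.insertNth (c R) x)‖
      ≤ (2 * R) ^ n * (ε / 2 ^ (n + 1) * (R ^ n)⁻¹) := by
        simpa using norm_setIntegral_Icc_neg_self_le hR.le hface
    _ = ε / 2 := by field_simp; ring
    _ < ε := half_lt_self hε

lemma tendsto_boxFlux_zero {f : Fin (n + 1) → (Fin (n + 1) → ℝ) → E}
    (hdecay : ∀ i, f i =o[cocompact _] fun x => (‖x‖ ^ n)⁻¹) :
    Tendsto (boxFlux f) atTop (𝓝 0) := by
  have h := tendsto_finsetSum Finset.univ fun i _ =>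
    (tendsto_setIntegral_face_zero (hdecay i) i (c := id) fun _ => rfl).sub
      (tendsto_setIntegral_face_zero (hdecay i) i (c := Neg.neg) abs_neg)
  simp only [id_eq, sub_zero, Finset.sum_const_zero] at h
  exact h

lemma aecover_Icc_neg_self {ι : Type*} [Fintype ι] {μ : Measure (ι → ℝ)} :
    AECover μ atTop fun R : ℝ => Icc (fun _ : ι => -R) (fun _ => R) where
  ae_eventually_mem := ae_of_all _ fun x => by
    filter_upwards [eventually_ge_atTop ‖x‖] with R hR
    have hx : ∀ j, |x j| ≤ R := fun j => (norm_le_pi_norm x j).trans hR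
    exact ⟨fun j => (abs_le.mp (hx j)).1, fun j => (abs_le.mp (hx j)).2⟩
  measurableSet _ := measurableSet_Icc

theorem integral_divergence_eq_zero_of_isLittleO
    {f : Fin (n + 1) → (Fin (n + 1) → ℝ) → E}
    {f' : Fin (n + 1) → (Fin (n + 1) → ℝ) → (Fin (n + 1) → ℝ) →L[ℝ] E}
    (hf : ∀ i x, HasFDerivAt (f i) (f' i x) x)
    (hdecay : ∀ i, f i =o[cocompact _] fun x => (‖x‖ ^ n)⁻¹)
    (hint : Integrable fun x => ∑ i, f' i x (Pi.single i 1)) :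
    ∫ x, ∑ i, f' i x (Pi.single i 1) = 0 := by
  have hbox := aecover_Icc_neg_self.integral_tendsto_of_countably_generated hint
  have hflux : ∀ᶠ R in atTop,
      boxFlux f R = ∫ x in Icc (fun _ => -R) (fun _ => R), ∑ i, f' i x (Pi.single i 1) := by
    filter_upwards [eventually_ge_atTop 0] with R hR
    exact (setIntegral_Icc_neg_self_divergence_eq_boxFlux hf hint hR).symm
  exact tendsto_nhds_unique hbox ((tendsto_boxFlux_zero hdecay).congr' hflux)

end Box

lemma ContinuousLinearEquiv.isBigO_inv_pow_norm_comp {F G : Type*} [NormedAddCommGroup F]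
    [NormedSpace ℝ F] [NormedAddCommGroup G] [NormedSpace ℝ G] (e : F ≃L[ℝ] G) (n : ℕ)
    (l : Filter F) : (fun x => (‖e x‖ ^ n)⁻¹) =O[l] fun x => (‖x‖ ^ n)⁻¹ := by
  have he : (fun x => e x) =Θ[l] fun x => x := ⟨e.isBigO_comp _ l, e.isBigO_comp_rev _ l⟩
  exact (he.norm_left.norm_right.pow n).inv.isBigO

theorem EuclideanSpace.integral_divergence_eq_zero_of_isLittleO [NormedSpace ℝ E] {n : ℕ}
    {f : Fin (n + 1) → EuclideanSpace ℝ (Fin (n + 1)) → E}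
    {f' : Fin (n + 1) → EuclideanSpace ℝ (Fin (n + 1)) →
      EuclideanSpace ℝ (Fin (n + 1)) →L[ℝ] E}
    (hf : ∀ i x, HasFDerivAt (f i) (f' i x) x)
    (hdecay : ∀ i, f i =o[cocompact _] fun x => (‖x‖ ^ n)⁻¹)
    (hint : Integrable fun x => ∑ i, f' i x (EuclideanSpace.single i 1)) :
    ∫ x, ∑ i, f' i x (EuclideanSpace.single i 1) = 0 := by
  let e := (EuclideanSpace.equiv (Fin (n + 1)) ℝ).symm
  have hmp := PiLp.volume_preserving_toLp (Fin (n + 1))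
  have hemb := (MeasurableEquiv.toLp 2 (Fin (n + 1) → ℝ)).measurableEmbedding
  rw [← hmp.integral_comp hemb]
  exact _root_.integral_divergence_eq_zero_of_isLittleO (f := fun i x => f i (e x))
    (f' := fun i x => (f' i (e x)).comp (e : (Fin (n + 1) → ℝ) →L[ℝ] _))
    (fun i x => (hf i (e x)).comp x e.hasFDerivAt)
    (fun i => ((hdecay i).comp_tendsto e.toHomeomorph.map_cocompact.le).trans_isBigO
      (e.isBigO_inv_pow_norm_comp n _))
    ((hmp.integrable_comp_emb hemb).2 hint)

theorem stmt7
    (u : EuclideanSpace ℝ (Fin 2) → ℝ)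
    (hu : ContDiff ℝ 2 u)
    (hgrad : (fun x => ‖fderiv ℝ u x‖)
      =o[cocompact (EuclideanSpace ℝ (Fin 2))] fun x => ‖x‖⁻¹)
    (hint : Integrable (fun x => pd2 0 (pd2 0 u) x + pd2 1 (pd2 1 u) x)) :
    ∫ x, (pd2 0 (pd2 0 u) x + pd2 1 (pd2 1 u) x) = 0 := by
  have hpd : ∀ i, ContDiff ℝ 1 (pd2 i u) := fun i =>
    (hu.fderiv_right (by norm_num)).clm_apply contDiff_const
  have hpd_le : ∀ i x, ‖pd2 i u x‖ ≤ ‖fderiv ℝ u x‖ := fun i x => by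
    simpa [pd2] using (fderiv ℝ u x).le_opNorm (EuclideanSpace.single i 1)
  have key := EuclideanSpace.integral_divergence_eq_zero_of_isLittleO (n := 1)
    (f := fun i => pd2 i u) (f' := fun i x => fderiv ℝ (pd2 i u) x)
    (fun i x => ((hpd i).differentiable one_ne_zero x).hasFDerivAt)
    (fun i => (IsBigO.of_norm_le (hpd_le i)).trans_isLittleO (by simpa using hgrad))
    (by simp only [Nat.reduceAdd, Fin.sum_univ_two]; exact hint)
  simp only [Nat.reduceAdd, Fin.sum_univ_two] at key
  exact key

end
end

section
/- Let v = (v¹, v²) : ℝ² → ℝ² be a continuously differentiable vector field with |v(x)| = o(|x|^{−1}) as |x| → ∞, such that v¹(0, x₂) = 0 for all x₂ ∈ ℝ, and such that the divergence ∂₁v¹ + ∂₂v² is Lebesgue integrable on the closed half-plane H = {(x₁,x₂) ∈ ℝ² : x₁ ≥ 0}. Then ∫_H (∂₁v¹ + ∂₂v²) dx = 0. -/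
/-!
Exhaust the half-plane by the boxes `[0, n] × [-n, n]`. By the divergence theorem the integral
over a box is the outward flux of `v` through its boundary; the edge on the axis `x₁ = 0`
contributes nothing because `v¹` vanishes there, and each of the other three edges lies where
`‖x‖ ≥ n`, so it has length at most `2n` while `|v| = o(1/n)` on it. The fluxes therefore tend
to `0`, while the box integrals tend to the integral over the half-plane by integrability.
-/

open Filter Asymptotics MeasureTheory Topology Set

lemma monotone_Icc_zero_neg_natCast :
    Monotone fun n : ℕ => Icc ((0 : ℝ), -(n : ℝ)) ((n : ℝ), (n : ℝ)) := by
  intro m n hmn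
  have h : (m : ℝ) ≤ n := by exact_mod_cast hmn
  exact Icc_subset_Icc ⟨le_rfl, neg_le_neg h⟩ ⟨h, h⟩

lemma iUnion_Icc_zero_neg_natCast :
    ⋃ n : ℕ, Icc ((0 : ℝ), -(n : ℝ)) ((n : ℝ), (n : ℝ)) = {p : ℝ × ℝ | 0 ≤ p.1} := by
  ext p
  simp only [mem_iUnion, mem_Icc, mem_ofPred_eq, Prod.le_def]
  refine ⟨fun ⟨_, ⟨h, _⟩, _⟩ => h,
    fun hp => ⟨⌈max p.1 |p.2|⌉₊, ⟨hp, ?_⟩, ?_, ?_⟩⟩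
  · exact neg_le_of_abs_le ((le_max_right _ _).trans (Nat.le_ceil _))
  · exact (le_max_left _ _).trans (Nat.le_ceil _)
  · exact le_of_abs_le ((le_max_right _ _).trans (Nat.le_ceil _))

lemma eventually_forall_norm_le_div_of_isLittleO_inv {E F : Type*} [NormedAddCommGroup E]
    [ProperSpace E] [NormedAddCommGroup F] {f : E → F}
    (hf : (fun x => ‖f x‖) =o[cocompact E] fun x => ‖x‖⁻¹) {ε : ℝ} (hε : 0 < ε) :
    ∀ᶠ r in atTop, ∀ x, r ≤ ‖x‖ → ‖f x‖ ≤ ε / r := by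
  have hev := hf.def hε
  rw [← Metric.cobounded_eq_cocompact,
    (Metric.hasBasis_cobounded_compl_closedBall (0 : E)).eventually_iff] at hev
  obtain ⟨R, -, hR⟩ := hev
  filter_upwards [eventually_gt_atTop (max R 0)] with r hr x hx
  have hxR : x ∈ (Metric.closedBall (0 : E) R)ᶜ := by
    simpa using (le_max_left R 0).trans_lt (hr.trans_le hx)
  have hr0 : 0 < r := (le_max_right R 0).trans_lt hr
  calc ‖f x‖ ≤ ε * ‖x‖⁻¹ := by simpa using hR hxR
    _ ≤ ε * r⁻¹ := by gcongr
    _ = ε / r := rfl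

lemma integral_divergence_Icc_of_contDiff {E : Type*} [NormedAddCommGroup E] [NormedSpace ℝ E]
    [CompleteSpace E] {f g : ℝ × ℝ → E} (hf : ContDiff ℝ 1 f) (hg : ContDiff ℝ 1 g)
    {a b : ℝ × ℝ} (hab : a ≤ b) :
    ∫ p in Icc a b, fderiv ℝ f p (1, 0) + fderiv ℝ g p (0, 1) =
      (((∫ x in a.1..b.1, g (x, b.2)) - ∫ x in a.1..b.1, g (x, a.2)) +
          ∫ y in a.2..b.2, f (b.1, y)) - ∫ y in a.2..b.2, f (a.1, y) := by
  have hcont : Continuous fun p => fderiv ℝ f p (1, 0) + fderiv ℝ g p (0, 1) :=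
    ((hf.continuous_fderiv one_ne_zero).clm_apply continuous_const).add
      ((hg.continuous_fderiv one_ne_zero).clm_apply continuous_const)
  exact integral_divergence_prod_Icc_of_hasFDerivAt_off_countable_of_le f g _ _ a b hab ∅
    countable_empty hf.continuous.continuousOn hg.continuous.continuousOn
    (fun x _ => (hf.differentiable one_ne_zero x).hasFDerivAt)
    (fun x _ => (hg.differentiable one_ne_zero x).hasFDerivAt)
    (hcont.continuousOn.integrableOn_compact isCompact_Icc)

/-- Outward flux of `v` through the three edges of `[0, r] × [-r, r]` off the axis `x₁ = 0`. -/
noncomputable def halfBoxFlux (v : ℝ × ℝ → ℝ × ℝ) (r : ℝ) : ℝ :=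
  ((∫ x in (0 : ℝ)..r, (v (x, r)).2) - ∫ x in (0 : ℝ)..r, (v (x, -r)).2) +
    ∫ y in -r..r, (v (r, y)).1

-- The three edges lie on the sphere `‖x‖ = r`, since the norm on `ℝ × ℝ` is the sup norm.
lemma norm_halfBoxFlux_le {v : ℝ × ℝ → ℝ × ℝ} {r C : ℝ} (hr : 0 ≤ r)
    (hC : ∀ x, r ≤ ‖x‖ → ‖v x‖ ≤ C) : ‖halfBoxFlux v r‖ ≤ 4 * r * C := by
  have habs : |r| = r := abs_of_nonneg hr
  have horiz : ∀ y, |y| = r → ‖∫ x in (0 : ℝ)..r, (v (x, y)).2‖ ≤ C * r := fun y hy => by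
    have h := intervalIntegral.norm_integral_le_of_norm_le_const (a := 0) (b := r)
      fun x _ => (norm_snd_le _).trans (hC (x, y) (by simp [Prod.norm_def, hy]))
    rwa [sub_zero, habs] at h
  have vert : ‖∫ y in -r..r, (v (r, y)).1‖ ≤ C * (2 * r) := by
    have h := intervalIntegral.norm_integral_le_of_norm_le_const (a := -r) (b := r)
      fun y _ => (norm_fst_le _).trans (hC (r, y) (by simp [Prod.norm_def, habs]))
    rwa [sub_neg_eq_add, ← two_mul, abs_of_nonneg (by positivity)] at h
  calc ‖halfBoxFlux v r‖
      ≤ ‖∫ x in (0 : ℝ)..r, (v (x, r)).2‖ + ‖∫ x in (0 : ℝ)..r, (v (x, -r)).2‖ +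
          ‖∫ y in -r..r, (v (r, y)).1‖ :=
        (norm_add_le _ _).trans (add_le_add_left (norm_sub_le _ _) _)
    _ ≤ C * r + C * r + C * (2 * r) :=
        add_le_add (add_le_add (horiz r habs) (horiz (-r) (by rwa [abs_neg]))) vert
    _ = 4 * r * C := by ring

lemma tendsto_halfBoxFlux_atTop {v : ℝ × ℝ → ℝ × ℝ}
    (hdecay : (fun x => ‖v x‖) =o[cocompact (ℝ × ℝ)] fun x => ‖x‖⁻¹) :
    Tendsto (halfBoxFlux v) atTop (𝓝 0) := by
  rw [NormedAddGroup.tendsto_nhds_zero]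
  intro ε hε
  have hε8 : 0 < ε / 8 := by positivity
  filter_upwards [eventually_forall_norm_le_div_of_isLittleO_inv hdecay hε8,
    eventually_gt_atTop 0] with r hC hr
  calc ‖halfBoxFlux v r‖ ≤ 4 * r * (ε / 8 / r) := norm_halfBoxFlux_le hr.le hC
    _ = ε / 2 := by field_simp; ring
    _ < ε := by linarith

theorem stmt8
    (v : ℝ × ℝ → ℝ × ℝ)
    (hv : ContDiff ℝ 1 v)
    (hdecay : (fun x => ‖v x‖) =o[cocompact (ℝ × ℝ)] fun x => ‖x‖⁻¹)
    (haxis : ∀ z : ℝ, (v (0, z)).1 = 0)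
    (hint : IntegrableOn
      (fun p => fderiv ℝ (fun q => (v q).1) p (1, 0) + fderiv ℝ (fun q => (v q).2) p (0, 1))
      {p : ℝ × ℝ | 0 ≤ p.1}) :
    ∫ p in {p : ℝ × ℝ | 0 ≤ p.1},
      (fderiv ℝ (fun q => (v q).1) p (1, 0) + fderiv ℝ (fun q => (v q).2) p (0, 1)) = 0 := by
  have hboxes := tendsto_setIntegral_of_monotone (fun _ => measurableSet_Icc)
    monotone_Icc_zero_neg_natCast (iUnion_Icc_zero_neg_natCast ▸ hint)
  rw [iUnion_Icc_zero_neg_natCast] at hboxes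
  have hbox_eq_flux : ∀ n : ℕ, ∫ p in Icc ((0 : ℝ), -(n : ℝ)) ((n : ℝ), (n : ℝ)),
      (fderiv ℝ (fun q => (v q).1) p (1, 0) + fderiv ℝ (fun q => (v q).2) p (0, 1)) =
        halfBoxFlux v n := fun n => by
    rw [integral_divergence_Icc_of_contDiff (f := fun q => (v q).1) (g := fun q => (v q).2)
      (contDiff_fst.comp hv) (contDiff_snd.comp hv)
      (Prod.le_def.2 ⟨n.cast_nonneg, neg_le_self n.cast_nonneg⟩)]
    simp [haxis, halfBoxFlux]
  simp only [hbox_eq_flux] at hboxes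
  exact tendsto_nhds_unique hboxes
    ((tendsto_halfBoxFlux_atTop hdecay).comp tendsto_natCast_atTop_atTop)
end

section
/- For all real numbers r, s, φ with 0 ≤ s < r, one has log(r² − 2 r s cos φ + s²) = 2 log r − 2 ∑_{n=1}^∞ (sⁿ / (n rⁿ)) cos(n φ), where the series on the right converges. -/
open Real

/-!
Put `z = t e^{iφ}` with `t = s / r`, so `|z| < 1`. The real part of the Taylor series
`-log (1 - z) = ∑ zⁿ / n` is `∑ tⁿ cos (n φ) / n`, and its sum is
`-log |1 - z| = -½ log (1 - 2 t cos φ + t²)`. Factoring `r²` out of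
`r² - 2 r s cos φ + s²` gives the theorem.
-/

namespace Complex

lemma normSq_one_sub_ofReal_mul_exp (t φ : ℝ) :
    normSq (1 - t * exp (φ * I)) = 1 - 2 * t * Real.cos φ + t ^ 2 := by
  rw [normSq_apply]
  simp only [sub_re, sub_im, one_re, one_im, re_ofReal_mul, im_ofReal_mul,
    exp_ofReal_mul_I_re, exp_ofReal_mul_I_im]
  linear_combination t ^ 2 * Real.sin_sq_add_cos_sq φ

lemma re_ofReal_mul_exp_pow_div (t φ : ℝ) (n : ℕ) :
    ((t * exp (φ * I)) ^ n / n).re = t ^ n / n * Real.cos (n * φ) := by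
  have h : (t * exp (φ * I)) ^ n / n = ((t ^ n / n : ℝ) : ℂ) * exp ((n * φ : ℝ) * I) := by
    rw [mul_pow, ← exp_nat_mul, ← mul_assoc]
    push_cast
    ring
  rw [h, re_ofReal_mul, exp_ofReal_mul_I_re]

end Complex

lemma one_sub_two_mul_mul_cos_add_sq_pos {t : ℝ} (ht : |t| < 1) (φ : ℝ) :
    0 < 1 - 2 * t * Real.cos φ + t ^ 2 := by
  have hcos : t * Real.cos φ ≤ |t| :=
    calc t * Real.cos φ ≤ |t| * |Real.cos φ| := abs_mul t _ ▸ le_abs_self _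
      _ ≤ |t| := mul_le_of_le_one_right (abs_nonneg t) (abs_cos_le_one φ)
  nlinarith [sq_abs t, sq_pos_of_pos (sub_pos.2 ht)]

lemma hasSum_pow_div_mul_cos {t : ℝ} (ht : |t| < 1) (φ : ℝ) :
    HasSum (fun n : ℕ => t ^ (n + 1) / (n + 1) * Real.cos ((n + 1) * φ))
      (-Real.log (1 - 2 * t * Real.cos φ + t ^ 2) / 2) := by
  set z : ℂ := t * Complex.exp (φ * Complex.I)
  have hz : ‖z‖ < 1 := by
    simpa [z, Complex.norm_exp_ofReal_mul_I] using ht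
  have hsum := Complex.hasSum_re (Complex.hasSum_taylorSeries_neg_log' hz)
  have hlog : (-Complex.log (1 - z)).re = -Real.log (1 - 2 * t * Real.cos φ + t ^ 2) / 2 := by
    rw [Complex.neg_re, Complex.log_re, Complex.norm_def,
      Complex.normSq_one_sub_ofReal_mul_exp, Real.log_sqrt]
    · ring
    · exact (one_sub_two_mul_mul_cos_add_sq_pos ht φ).le
  rw [hlog] at hsum
  convert hsum using 2 with n
  exact_mod_cast (Complex.re_ofReal_mul_exp_pow_div t φ (n + 1)).symm

theorem stmt10 (r s φ : ℝ) (hs : 0 ≤ s) (hsr : s < r) :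
    ∃ S : ℝ,
      HasSum (fun n : ℕ =>
        s ^ (n + 1) / ((n + 1) * r ^ (n + 1)) * Real.cos ((n + 1) * φ)) S ∧
      Real.log (r ^ 2 - 2 * r * s * Real.cos φ + s ^ 2) = 2 * Real.log r - 2 * S := by
  have hr : 0 < r := hs.trans_lt hsr
  have ht : |s / r| < 1 := by
    rw [abs_of_nonneg (div_nonneg hs hr.le)]
    exact (div_lt_one hr).2 hsr
  refine ⟨-Real.log (1 - 2 * (s / r) * Real.cos φ + (s / r) ^ 2) / 2, ?_, ?_⟩
  · convert hasSum_pow_div_mul_cos ht φ using 2 with n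
    rw [div_pow, div_div, mul_comm (r ^ (n + 1))]
  · have hfactor : r ^ 2 - 2 * r * s * Real.cos φ + s ^ 2
        = r ^ 2 * (1 - 2 * (s / r) * Real.cos φ + (s / r) ^ 2) := by
      field_simp
    rw [hfactor, Real.log_mul (by positivity) (one_sub_two_mul_mul_cos_add_sq_pos ht φ).ne',
      Real.log_pow]
    push_cast
    ring
end
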